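/- Let k ≥ 4 and let x_j = (cos(2πj/k), sin(2πj/k)) for j ∈ ℤ (indices modulo k) be the vertices of the regular k-gon inscribed in the unit circle, with sides the closed segments [x_{j}, x_{j+1}]. Let ρ : ℝ² → ℝ² be the rotation through angle 2π/k about the origin. Suppose the sides [x_{i−1}, x_i] and [x_{j−1}, x_j] are non-adjacent, i.e. the four vertices x_{i−1}, x_i, x_{j−1}, x_j are pairwise distinct. If α is a closed segment with one endpoint in [x_{i−1}, x_i] and the other endpoint in [x_{j−1}, x_j], then α ∩ ρ(α) ≠ ∅. -/

import Mathlib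

/-!
The points `p, ρ p, q, ρ q` lie on the sides `[x_{i-1}, x_i]`, `[x_i, x_{i+1}]`, `[x_{j-1}, x_j]`,
`[x_j, x_{j+1}]`, which are met in this counterclockwise order along the boundary of the convex
polygon because the sides of `p` and `q` are not adjacent. Hence every triangle spanned by three of
the four points, listed in that order, is positively oriented: `p, ρ p, q, ρ q` is a convex
quadrilateral with diagonals `[p, q]` and `[ρ p, ρ q]`. As `ρ` is linear, its doubled area is
`(q - p) × ρ (q - p) = |q - p|² sin (2π / k)`, which is positive since `p` and `q` lie on disjoint
sides; so the diagonals meet.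
-/

open Real

noncomputable def orient (a b c : ℝ × ℝ) : ℝ :=
  (b.1 - a.1) * (c.2 - a.2) - (b.2 - a.2) * (c.1 - a.1)

theorem orient_rotate (a b c : ℝ × ℝ) : orient a b c = orient b c a := by
  unfold orient; ring

theorem orient_convex_combination (a b c d : ℝ × ℝ) {s t : ℝ} (hst : s + t = 1) :
    orient a b (s • c + t • d) = s * orient a b c + t * orient a b d := by
  obtain rfl : t = 1 - s := by linarith
  simp only [orient, Prod.fst_add, Prod.snd_add, Prod.smul_fst, Prod.smul_snd, smul_eq_mul]
  ring

theorem orient_eq_zero_of_mem_segment {a b c : ℝ × ℝ} (hc : c ∈ segment ℝ a b) :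
    orient a b c = 0 := by
  obtain ⟨s, t, -, -, hst, rfl⟩ := hc
  rw [orient_convex_combination a b a b hst]
  simp only [orient]
  ring

theorem orient_nonneg_of_mem_segment {a b c c₁ c₂ : ℝ × ℝ} (hc : c ∈ segment ℝ c₁ c₂)
    (h₁ : 0 ≤ orient a b c₁) (h₂ : 0 ≤ orient a b c₂) : 0 ≤ orient a b c := by
  obtain ⟨s, t, hs, ht, hst, rfl⟩ := hc
  rw [orient_convex_combination a b c₁ c₂ hst]
  positivity

theorem orient_pos_of_mem_segment {a b c c₁ c₂ : ℝ × ℝ} (hc : c ∈ segment ℝ c₁ c₂)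
    (h₁ : 0 < orient a b c₁) (h₂ : 0 < orient a b c₂) : 0 < orient a b c := by
  obtain ⟨s, t, hs, ht, hst, rfl⟩ := hc
  rw [orient_convex_combination a b c₁ c₂ hst]
  rcases hs.eq_or_lt with rfl | hs
  · simp_all
  · positivity

theorem orient_nonneg_of_mem_segments {a₁ a₂ b₁ b₂ c₁ c₂ a b c : ℝ × ℝ}
    (ha : a ∈ segment ℝ a₁ a₂) (hb : b ∈ segment ℝ b₁ b₂) (hc : c ∈ segment ℝ c₁ c₂)
    (h : ∀ a ∈ ({a₁, a₂} : Set _), ∀ b ∈ ({b₁, b₂} : Set _), ∀ c ∈ ({c₁, c₂} : Set _),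
      0 ≤ orient a b c) :
    0 ≤ orient a b c := by
  refine orient_nonneg_of_mem_segment hc ?_ ?_ <;> rw [orient_rotate] <;>
    refine orient_nonneg_of_mem_segment ha ?_ ?_ <;> rw [orient_rotate] <;>
    refine orient_nonneg_of_mem_segment hb ?_ ?_ <;> rw [orient_rotate] <;>
    apply h <;> simp

/-- The common point of the diagonals of the convex quadrilateral `a b c d` comes from the identity
`orient b c d • a - orient a c d • b + orient a b d • c - orient a b c • d = 0`. -/
theorem segment_inter_nonempty_of_orient_nonneg {a b c d : ℝ × ℝ}
    (habc : 0 ≤ orient a b c) (hacd : 0 ≤ orient a c d) (habd : 0 ≤ orient a b d)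
    (hbcd : 0 ≤ orient b c d) (hS : 0 < orient a b c + orient a c d) :
    (segment ℝ a c ∩ segment ℝ b d).Nonempty := by
  set S := orient a b c + orient a c d
  have hS' : orient b c d + orient a b d = S := by simp only [S, orient]; ring
  refine ⟨(orient b c d / S) • a + (orient a b d / S) • c,
    ⟨_, _, by positivity, by positivity, by field_simp; linarith, rfl⟩,
    ⟨orient a c d / S, orient a b c / S, by positivity, by positivity, by field_simp; ring, ?_⟩⟩
  ext <;> simp only [Prod.fst_add, Prod.snd_add, Prod.smul_fst, Prod.smul_snd, smul_eq_mul] <;>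
    field_simp <;> simp only [orient] <;> ring

theorem orient_cos_sin (α β γ : ℝ) :
    orient (cos α, sin α) (cos β, sin β) (cos γ, sin γ) =
      4 * sin ((β - α) / 2) * sin ((γ - β) / 2) * sin ((γ - α) / 2) := by
  have h : orient (cos α, sin α) (cos β, sin β) (cos γ, sin γ) =
      sin (β - α) + sin (γ - β) - sin (γ - α) := by
    simp only [orient, sin_sub]; ring
  set u := (β - α) / 2
  set v := (γ - β) / 2
  rw [h, show β - α = 2 * u by ring, show γ - β = 2 * v by ring,
    show (γ - α) / 2 = u + v by ring, show γ - α = 2 * (u + v) by ring,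
    sin_two_mul, sin_two_mul, sin_two_mul, sin_add, cos_add]
  linear_combination (-(2 * sin v * cos v)) * sin_sq_add_cos_sq u +
    (-(2 * sin u * cos u)) * sin_sq_add_cos_sq v

theorem orient_cos_sin_nonneg {α β γ : ℝ} (h₁ : α ≤ β) (h₂ : β ≤ γ) (h₃ : γ ≤ α + 2 * π) :
    0 ≤ orient (cos α, sin α) (cos β, sin β) (cos γ, sin γ) := by
  rw [orient_cos_sin]
  have h (x y : ℝ) (hxy : x ≤ y) (hyx : y ≤ x + 2 * π) : 0 ≤ sin ((y - x) / 2) :=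
    sin_nonneg_of_nonneg_of_le_pi (by linarith) (by linarith)
  have := h α β h₁ (by linarith)
  have := h β γ h₂ (by linarith)
  have := h α γ (by linarith) h₃
  positivity

theorem orient_cos_sin_pos {α β γ : ℝ} (h₁ : α < β) (h₂ : β < γ) (h₃ : γ < α + 2 * π) :
    0 < orient (cos α, sin α) (cos β, sin β) (cos γ, sin γ) := by
  rw [orient_cos_sin]
  have h (x y : ℝ) (hxy : x < y) (hyx : y < x + 2 * π) : 0 < sin ((y - x) / 2) :=
    sin_pos_of_pos_of_lt_pi (by linarith) (by linarith)
  have := h α β h₁ (by linarith)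
  have := h β γ h₂ (by linarith)
  have := h α γ (by linarith) h₃
  positivity

noncomputable def rot (θ : ℝ) : ℝ × ℝ →ₗ[ℝ] ℝ × ℝ where
  toFun v := (cos θ * v.1 - sin θ * v.2, sin θ * v.1 + cos θ * v.2)
  map_add' v w := by ext <;> simp only [Prod.fst_add, Prod.snd_add] <;> ring
  map_smul' c v := by
    ext <;> simp only [Prod.smul_fst, Prod.smul_snd, smul_eq_mul, RingHom.id_apply] <;> ring

theorem rot_apply (θ : ℝ) (v : ℝ × ℝ) :
    rot θ v = (cos θ * v.1 - sin θ * v.2, sin θ * v.1 + cos θ * v.2) := rfl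

theorem rot_cos_sin (θ α : ℝ) : rot θ (cos α, sin α) = (cos (α + θ), sin (α + θ)) := by
  rw [rot_apply, cos_add, sin_add]
  ext <;> dsimp only <;> ring

theorem image_rot_segment (θ : ℝ) (a b : ℝ × ℝ) :
    rot θ '' segment ℝ a b = segment ℝ (rot θ a) (rot θ b) :=
  image_segment ℝ (rot θ).toAffineMap a b

/-- Twice the area of the quadrilateral `p, rot θ p, q, rot θ q` is the cross product of its
diagonals `q - p` and `rot θ (q - p)`. -/
theorem orient_add_orient_rot (θ : ℝ) (p q : ℝ × ℝ) :
    orient p (rot θ p) q + orient p q (rot θ q) =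
      sin θ * ((q.1 - p.1) ^ 2 + (q.2 - p.2) ^ 2) := by
  simp only [orient, rot_apply]
  ring

theorem orient_add_orient_rot_pos {θ : ℝ} (hθ : 0 < sin θ) {p q : ℝ × ℝ} (hpq : p ≠ q) :
    0 < orient p (rot θ p) q + orient p q (rot θ q) := by
  rw [orient_add_orient_rot]
  refine mul_pos hθ ?_
  by_contra! h
  exact hpq (Prod.ext (by nlinarith) (by nlinarith))

noncomputable def polygonAngle (k : ℕ) (m : ℤ) : ℝ := 2 * π * m / k

noncomputable def polygonVertex (k : ℕ) (m : ℤ) : ℝ × ℝ :=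
  (cos (polygonAngle k m), sin (polygonAngle k m))

theorem strictMono_polygonAngle {k : ℕ} (hk : 0 < k) : StrictMono (polygonAngle k) :=
  fun a b h => by unfold polygonAngle; gcongr

theorem polygonAngle_add_natCast {k : ℕ} (hk : 0 < k) (m : ℤ) :
    polygonAngle k (m + k) = polygonAngle k m + 2 * π := by
  unfold polygonAngle
  push_cast
  field_simp

theorem polygonVertex_congr {k : ℕ} {m m' : ℤ} (h : m ≡ m' [ZMOD k]) :
    polygonVertex k m = polygonVertex k m' := by
  obtain rfl | hk := eq_or_ne k 0
  · simp [polygonVertex, polygonAngle]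
  obtain ⟨t, ht⟩ := h.dvd
  have : polygonAngle k m' = polygonAngle k m + t * (2 * π) := by
    rw [polygonAngle, polygonAngle, show m' = m + k * t by linarith]
    push_cast
    field_simp
  simp only [polygonVertex, this, cos_add_int_mul_two_pi, sin_add_int_mul_two_pi]

theorem rot_polygonVertex (k : ℕ) (m : ℤ) :
    rot (2 * π / k) (polygonVertex k m) = polygonVertex k (m + 1) := by
  rw [polygonVertex, rot_cos_sin, polygonVertex, polygonAngle, polygonAngle]
  congr 2 <;> push_cast <;> ring

theorem rot_mem_segment_polygonVertex {k : ℕ} {m m' : ℤ} {p : ℝ × ℝ}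
    (hp : p ∈ segment ℝ (polygonVertex k m) (polygonVertex k m')) :
    rot (2 * π / k) p ∈ segment ℝ (polygonVertex k (m + 1)) (polygonVertex k (m' + 1)) := by
  rw [← rot_polygonVertex, ← rot_polygonVertex, ← image_rot_segment]
  exact Set.mem_image_of_mem _ hp

theorem orient_polygonVertex_nonneg {k : ℕ} (hk : 0 < k) {l m n : ℤ} (hlm : l ≤ m)
    (hmn : m ≤ n) (hnl : n ≤ l + k) :
    0 ≤ orient (polygonVertex k l) (polygonVertex k m) (polygonVertex k n) :=
  have h := (strictMono_polygonAngle hk).monotone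
  orient_cos_sin_nonneg (h hlm) (h hmn) ((h hnl).trans_eq (polygonAngle_add_natCast hk l))

theorem orient_polygonVertex_pos {k : ℕ} (hk : 0 < k) {l m n : ℤ} (hlm : l < m) (hmn : m < n)
    (hnl : n < l + k) :
    0 < orient (polygonVertex k l) (polygonVertex k m) (polygonVertex k n) :=
  have h := strictMono_polygonAngle hk
  orient_cos_sin_pos (h hlm) (h hmn) ((h hnl).trans_eq (polygonAngle_add_natCast hk l))

theorem orient_nonneg_of_mem_polygon {k : ℕ} (hk : 0 < k) {u₁ u₂ v₁ v₂ w₁ w₂ : ℤ}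
    {a b c : ℝ × ℝ} (ha : a ∈ segment ℝ (polygonVertex k u₁) (polygonVertex k u₂))
    (hb : b ∈ segment ℝ (polygonVertex k v₁) (polygonVertex k v₂))
    (hc : c ∈ segment ℝ (polygonVertex k w₁) (polygonVertex k w₂))
    (h₁ : u₁ ≤ u₂) (h₂ : u₂ ≤ v₁) (h₃ : v₁ ≤ v₂) (h₄ : v₂ ≤ w₁) (h₅ : w₁ ≤ w₂)
    (h₆ : w₂ ≤ u₁ + k) :
    0 ≤ orient a b c := by
  refine orient_nonneg_of_mem_segments ha hb hc ?_
  simp only [Set.mem_insert_iff, Set.mem_singleton_iff]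
  rintro _ (rfl | rfl) _ (rfl | rfl) _ (rfl | rfl) <;>
    exact orient_polygonVertex_nonneg hk (by omega) (by omega) (by omega)

theorem exists_modEq_nonadjacent {k : ℕ} (hk : 0 < k) {i j : ℤ}
    (h₁ : polygonVertex k (i - 1) ≠ polygonVertex k j)
    (h₂ : polygonVertex k i ≠ polygonVertex k (j - 1))
    (h₃ : polygonVertex k i ≠ polygonVertex k j) :
    ∃ j', j' ≡ j [ZMOD k] ∧ i + 2 ≤ j' ∧ j' + 2 ≤ i + k := by
  have hj : i + (j - i) % k ≡ j [ZMOD k] := by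
    simpa using (Int.mod_modEq (j - i) k).add_left i
  refine ⟨_, hj, ?_⟩
  have := Int.emod_nonneg (j - i) (by omega : (k : ℤ) ≠ 0)
  have := Int.emod_lt_of_pos (j - i) (by omega : (0 : ℤ) < k)
  have ne_zero : (j - i) % k ≠ 0 := fun h => h₃ (by
    rw [← polygonVertex_congr hj, h, add_zero])
  have ne_one : (j - i) % k ≠ 1 := fun h => h₂ (by
    rw [← polygonVertex_congr (hj.sub_right 1), h, add_sub_cancel_right])
  have ne_pred : (j - i) % k ≠ k - 1 := fun h => h₁ (by
    rw [← polygonVertex_congr hj, h]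
    exact polygonVertex_congr (Int.modEq_iff_dvd.2 ⟨1, by ring⟩))
  omega

theorem segment_meets_rotation_general (k : ℕ) (hk : 4 ≤ k)
    (x : ℤ → ℝ × ℝ)
    (hx : ∀ j : ℤ, x j = (Real.cos (2 * Real.pi * j / k), Real.sin (2 * Real.pi * j / k)))
    (ρ : ℝ × ℝ → ℝ × ℝ)
    (hρ : ∀ v : ℝ × ℝ, ρ v =
      (Real.cos (2 * Real.pi / k) * v.1 - Real.sin (2 * Real.pi / k) * v.2,
       Real.sin (2 * Real.pi / k) * v.1 + Real.cos (2 * Real.pi / k) * v.2))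
    (i j : ℤ)
    (h3 : x (i - 1) ≠ x j)
    (h4 : x i ≠ x (j - 1)) (h5 : x i ≠ x j)
    (p q : ℝ × ℝ)
    (hp : p ∈ segment ℝ (x (i - 1)) (x i)) (hq : q ∈ segment ℝ (x (j - 1)) (x j)) :
    (segment ℝ p q ∩ ρ '' segment ℝ p q).Nonempty := by
  obtain rfl : x = polygonVertex k := funext hx
  obtain rfl : ρ = rot (2 * π / k) := funext hρ
  have hk₀ : 0 < k := by omega
  obtain ⟨j', hj', hij, hji⟩ := exists_modEq_nonadjacent hk₀ h3 h4 h5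
  rw [← polygonVertex_congr hj', ← polygonVertex_congr (hj'.sub_right 1)] at hq
  have hρp := rot_mem_segment_polygonVertex hp
  have hρq := rot_mem_segment_polygonVertex hq
  -- the line through the side of `p` contains `p` and has `q` strictly on its inner side
  have hpq : p ≠ q := by
    rintro rfl
    refine (orient_pos_of_mem_segment hq ?_ ?_).ne' (orient_eq_zero_of_mem_segment hp) <;>
      exact orient_polygonVertex_pos hk₀ (by omega) (by omega) (by omega)
  have hθ : 0 < sin (2 * π / k) := by
    have : (4 : ℝ) ≤ k := by exact_mod_cast hk
    apply sin_pos_of_pos_of_lt_pi (by positivity)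
    rw [div_lt_iff₀ (by positivity)]
    nlinarith [pi_pos]
  rw [image_rot_segment]
  refine segment_inter_nonempty_of_orient_nonneg
    (orient_nonneg_of_mem_polygon hk₀ hp hρp hq ?_ ?_ ?_ ?_ ?_ ?_)
    (orient_nonneg_of_mem_polygon hk₀ hp hq hρq ?_ ?_ ?_ ?_ ?_ ?_)
    (orient_nonneg_of_mem_polygon hk₀ hp hρp hρq ?_ ?_ ?_ ?_ ?_ ?_)
    (orient_nonneg_of_mem_polygon hk₀ hρp hq hρq ?_ ?_ ?_ ?_ ?_ ?_)
    (orient_add_orient_rot_pos hθ hpq)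
  all_goals omega

/-- In the regular `k`-gon (`k ≥ 4`) inscribed in the unit circle, with `ρ` the rotation
through angle `2π/k` about the origin: a closed segment `α` joining two non-adjacent sides
`[x_{i-1}, x_i]` and `[x_{j-1}, x_j]` (i.e. the four vertices are pairwise distinct)
must meet its rotated image `ρ(α)`. -/
theorem segment_meets_rotation (k : ℕ) (hk : 4 ≤ k)
    (x : ℤ → ℝ × ℝ)
    (hx : ∀ j : ℤ, x j = (Real.cos (2 * Real.pi * j / k), Real.sin (2 * Real.pi * j / k)))
    (ρ : ℝ × ℝ → ℝ × ℝ)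
    (hρ : ∀ v : ℝ × ℝ, ρ v =
      (Real.cos (2 * Real.pi / k) * v.1 - Real.sin (2 * Real.pi / k) * v.2,
       Real.sin (2 * Real.pi / k) * v.1 + Real.cos (2 * Real.pi / k) * v.2))
    (i j : ℤ)
    (h1 : x (i - 1) ≠ x i) (h2 : x (i - 1) ≠ x (j - 1)) (h3 : x (i - 1) ≠ x j)
    (h4 : x i ≠ x (j - 1)) (h5 : x i ≠ x j) (h6 : x (j - 1) ≠ x j)
    (p q : ℝ × ℝ)
    (hp : p ∈ segment ℝ (x (i - 1)) (x i)) (hq : q ∈ segment ℝ (x (j - 1)) (x j)) :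
    (segment ℝ p q ∩ ρ '' segment ℝ p q).Nonempty :=
  segment_meets_rotation_general k hk x hx ρ hρ i j h3 h4 h5 p q hp hq
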